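/- (Lemma 6.5, first part) Suppose G carries an orientation such that K(v) > 0 for every v ∈ V. Then the isoperimetric constant at infinity satisfies α_ess(G) ≥ K^ess(G) := liminf_{v ∈ V} K(v). -/

import Mathlib

open scoped Classical ENNReal
open MeasureTheory

noncomputable section

/-- A real function on `[0, L]` which is continuous and piecewise continuously
differentiable: there is a finite partition `0 = x 0 < x 1 < ... < x n = L` such that
on each closed piece the function has a continuous derivative. -/
def PiecewiseC1 (f : ℝ → ℝ) (L : ℝ) : Prop :=
  ContinuousOn f (Set.Icc 0 L) ∧
  ∃ (n : ℕ) (x : Fin (n + 1) → ℝ), x 0 = 0 ∧ x (Fin.last n) = L ∧ StrictMono x ∧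
    ∀ i : Fin n, ∃ g : ℝ → ℝ,
      ContinuousOn g (Set.Icc (x i.castSucc) (x i.succ)) ∧
      ∀ t ∈ Set.Icc (x i.castSucc) (x i.succ),
        HasDerivWithinAt f (g t) (Set.Icc (x i.castSucc) (x i.succ)) t

/-- The underlying (unoriented) simple graph of a set of edges `E` with endpoint
map `ends : E → V × V`. -/
def graphOf {V E : Type} (ends : E → V × V) : SimpleGraph V :=
  SimpleGraph.fromRel fun u v => ∃ e, ends e = (u, v)

/-- A metric graph: a connected, locally finite, simple combinatorial graph with
countably infinite vertex and edge sets, each edge having a finite positive length.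
Each edge carries an (auxiliary) orientation given by `ends`. -/
structure MetricGraph : Type 1 where
  V : Type
  E : Type
  countV : Countable V
  infV : Infinite V
  countE : Countable E
  infE : Infinite E
  ends : E → V × V
  len : E → ℝ
  len_pos : ∀ e, 0 < len e
  no_loops : ∀ e, (ends e).1 ≠ (ends e).2
  no_multi : Function.Injective fun e => Sym2.mk (ends e)
  locfin : ∀ v, {e | (ends e).1 = v ∨ (ends e).2 = v}.Finite
  conn : (graphOf ends).Connected

namespace MetricGraph

/-- The underlying simple graph. -/
def graph (Γ : MetricGraph) : SimpleGraph Γ.V := graphOf Γ.ends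

/-- The star of a vertex: the set of edges incident to it. -/
def star (Γ : MetricGraph) (v : Γ.V) : Set Γ.E :=
  {e | (Γ.ends e).1 = v ∨ (Γ.ends e).2 = v}

/-- Combinatorial degree of a vertex. -/
def degree (Γ : MetricGraph) (v : Γ.V) : ℕ := (Γ.locfin v).toFinset.card

/-- The vertices of a (finite) subgraph given by a finite set of edges. -/
def vertsOf (Γ : MetricGraph) (F : Finset Γ.E) : Finset Γ.V :=
  F.image (fun e => (Γ.ends e).1) ∪ F.image fun e => (Γ.ends e).2

/-- The degree of a vertex inside the subgraph given by the edge set `F`. -/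
def degIn (Γ : MetricGraph) (F : Finset Γ.E) (v : Γ.V) : ℕ :=
  (F.filter fun e => (Γ.ends e).1 = v ∨ (Γ.ends e).2 = v).card

/-- Connectedness of the subgraph spanned by the edge set `F`. -/
def SubConn (Γ : MetricGraph) (F : Finset Γ.E) : Prop :=
  ((SimpleGraph.fromRel fun u v => ∃ e ∈ F, Γ.ends e = (u, v)).induce
    (↑(Γ.vertsOf F) : Set Γ.V)).Connected

/-- A finite connected subgraph (with at least one edge), given by its edge set. -/
def IsFinSubgraph (Γ : MetricGraph) (F : Finset Γ.E) : Prop :=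
  F.Nonempty ∧ Γ.SubConn F

/-- The boundary of a finite subgraph with respect to `Γ`: the vertices whose degree
in the subgraph is strictly smaller than the degree in `Γ`. -/
def bdry (Γ : MetricGraph) (F : Finset Γ.E) : Finset Γ.V :=
  (Γ.vertsOf F).filter fun v => Γ.degIn F v < Γ.degree v

/-- `deg (∂_G G̃)`. -/
def degBdry (Γ : MetricGraph) (F : Finset Γ.E) : ℝ :=
  ∑ v ∈ Γ.bdry F, (Γ.degIn F v : ℝ)

/-- The total length (Lebesgue measure) of a finite subgraph. -/
def mes (Γ : MetricGraph) (F : Finset Γ.E) : ℝ := ∑ e ∈ F, Γ.len e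

/-- The isoperimetric (Cheeger) constant of a metric graph. -/
def alpha (Γ : MetricGraph) : ℝ :=
  sInf {r : ℝ | ∃ F : Finset Γ.E, Γ.IsFinSubgraph F ∧ r = Γ.degBdry F / Γ.mes F}

/-- The isoperimetric constant at infinity, as an element of `[0,∞]`. -/
def alphaEssEnn (Γ : MetricGraph) : ℝ≥0∞ :=
  ⨆ W : Finset Γ.E, ⨅ (F : Finset Γ.E) (_ : Γ.IsFinSubgraph F ∧ Disjoint F W),
    ENNReal.ofReal (Γ.degBdry F / Γ.mes F)

/-- The vertex weight `m(v) = Σ_{e ∈ E_v} |e|`. -/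
def mweight (Γ : MetricGraph) (v : Γ.V) : ℝ :=
  ∑ e ∈ (Γ.locfin v).toFinset, Γ.len e

/-- The set of boundary edges of a vertex set: edges with exactly one endpoint in `X`. -/
def Eb (Γ : MetricGraph) (X : Set Γ.V) : Set Γ.E :=
  {e | Xor' ((Γ.ends e).1 ∈ X) ((Γ.ends e).2 ∈ X)}

/-- The discrete isoperimetric constant of a vertex set `U`. -/
def alphaD (Γ : MetricGraph) (U : Set Γ.V) : ℝ :=
  sInf {r : ℝ | ∃ X : Finset Γ.V, ↑X ⊆ U ∧ X.Nonempty ∧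
    r = ((Γ.Eb ↑X).ncard : ℝ) / ∑ v ∈ X, Γ.mweight v}

/-- The discrete isoperimetric constant at infinity, as an element of `[0,∞]`. -/
def alphaDEssEnn (Γ : MetricGraph) : ℝ≥0∞ :=
  ⨆ X : Finset Γ.V, ENNReal.ofReal (Γ.alphaD (↑X : Set Γ.V)ᶜ)

/-- The combinatorial isoperimetric constant. -/
def alphaComb (Γ : MetricGraph) : ℝ :=
  sInf {r : ℝ | ∃ X : Finset Γ.V, X.Nonempty ∧
    r = ((Γ.Eb ↑X).ncard : ℝ) / ∑ v ∈ X, (Γ.degree v : ℝ)}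

/-- `ℓ*(G) = sup of edge lengths`. -/
def ellSup (Γ : MetricGraph) : ℝ := sSup (Set.range Γ.len)

/-- `ℓ_*(G) = inf of edge lengths`. -/
def ellInf (Γ : MetricGraph) : ℝ := sInf (Set.range Γ.len)

/-- `ℓ*(G)` as an element of `[0,∞]`. -/
def ellSupEnn (Γ : MetricGraph) : ℝ≥0∞ := ⨆ e : Γ.E, ENNReal.ofReal (Γ.len e)

/-- `ℓ*_ess(G) = inf_F sup_{e ∉ F} |e|` as an element of `[0,∞]`. -/
def ellSupEssEnn (Γ : MetricGraph) : ℝ≥0∞ :=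
  ⨅ W : Finset Γ.E, ⨆ e : {e : Γ.E // e ∉ W}, ENNReal.ofReal (Γ.len (e : Γ.E))

/-- Outgoing edges at a vertex (for the fixed orientation). -/
def plusE (Γ : MetricGraph) (v : Γ.V) : Set Γ.E := {e | (Γ.ends e).1 = v}

/-- Incoming edges at a vertex (for the fixed orientation). -/
def minusE (Γ : MetricGraph) (v : Γ.V) : Set Γ.E := {e | (Γ.ends e).2 = v}

/-- The curvature `K(v) = ((#E_v⁺ − #E_v⁻)/#E_v⁺) · inf_{e ∈ E_v⁺} 1/|e|`. -/
def Kcurv (Γ : MetricGraph) (v : Γ.V) : ℝ :=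
  (((Γ.plusE v).ncard : ℝ) - ((Γ.minusE v).ncard : ℝ)) / ((Γ.plusE v).ncard : ℝ) *
    sInf ((fun e => 1 / Γ.len e) '' Γ.plusE v)

/-- The combinatorial curvature `K_comb(v) = 1 − #E_v⁻/#E_v⁺`. -/
def Kcomb (Γ : MetricGraph) (v : Γ.V) : ℝ :=
  1 - ((Γ.minusE v).ncard : ℝ) / ((Γ.plusE v).ncard : ℝ)

/-- `liminf_{v ∈ V} K(v) = sup over finite W of inf_{v ∉ W} K(v)`, in `[0,∞]`. -/
def KcurvEssEnn (Γ : MetricGraph) : ℝ≥0∞ :=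
  ⨆ W : Finset Γ.V, ⨅ v : {v : Γ.V // v ∉ W}, ENNReal.ofReal (Γ.Kcurv (v : Γ.V))

/-- `liminf_{v ∈ V} K_comb(v) = sup over finite W of inf_{v ∉ W} K_comb(v)`. -/
def KcombLiminf (Γ : MetricGraph) : ℝ :=
  sSup (Set.range fun W : Finset Γ.V => sInf (Γ.Kcomb '' (↑W : Set Γ.V)ᶜ))

/-- The value of an edgewise function at an endpoint of an edge. -/
def endVal (Γ : MetricGraph) (f : Γ.E → ℝ → ℝ) (e : Γ.E) (v : Γ.V) : ℝ :=
  if (Γ.ends e).1 = v then f e 0 else f e (Γ.len e)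

/-- A test function on the metric graph `Γ`: a family of continuous, piecewise `C¹`
functions on the edges, matching at the vertices, vanishing on all but finitely
many edges. -/
structure TestFun (Γ : MetricGraph) where
  f : Γ.E → ℝ → ℝ
  piecewise : ∀ e, PiecewiseC1 (f e) (Γ.len e)
  vertexCont : ∀ e e' : Γ.E, ∀ v : Γ.V, e ∈ Γ.star v → e' ∈ Γ.star v →
    Γ.endVal f e v = Γ.endVal f e' v
  finSupp : {e : Γ.E | ∃ x ∈ Set.Icc 0 (Γ.len e), f e x ≠ 0}.Finite

/-- `‖f‖² = Σ_e ∫₀^{|e|} f_e(x)² dx`. -/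
def TestFun.normSq {Γ : MetricGraph} (φ : TestFun Γ) : ℝ :=
  ∑ᶠ e : Γ.E, ∫ x in (0:ℝ)..Γ.len e, (φ.f e x) ^ 2

/-- `‖f′‖² = Σ_e ∫₀^{|e|} f_e′(x)² dx`. -/
def TestFun.energySq {Γ : MetricGraph} (φ : TestFun Γ) : ℝ :=
  ∑ᶠ e : Γ.E, ∫ x in (0:ℝ)..Γ.len e, (deriv (φ.f e) x) ^ 2

/-- A test function is nonzero if it does not vanish identically on the graph. -/
def TestFun.Nonzero {Γ : MetricGraph} (φ : TestFun Γ) : Prop :=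
  ∃ e : Γ.E, ∃ x ∈ Set.Icc 0 (Γ.len e), φ.f e x ≠ 0

/-- The bottom of the spectrum of the Kirchhoff Laplacian, via the variational
(Rayleigh quotient) characterization. -/
def lambda0 (Γ : MetricGraph) : ℝ :=
  sInf {r : ℝ | ∃ φ : TestFun Γ, φ.Nonzero ∧ r = φ.energySq / φ.normSq}

end MetricGraph

/-- A weighted graph `(V, m, b)`: a connected, locally finite, simple combinatorial
graph with countably infinite vertex and edge sets, an edge weight `b` and a vertex
weight `m`. -/
structure WeightedGraph : Type 1 where
  V : Type
  E : Type
  countV : Countable V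
  infV : Infinite V
  countE : Countable E
  infE : Infinite E
  ends : E → V × V
  no_loops : ∀ e, (ends e).1 ≠ (ends e).2
  no_multi : Function.Injective fun e => Sym2.mk (ends e)
  locfin : ∀ v, {e | (ends e).1 = v ∨ (ends e).2 = v}.Finite
  conn : (graphOf ends).Connected
  b : E → ℝ
  b_pos : ∀ e, 0 < b e
  m : V → ℝ
  m_pos : ∀ v, 0 < m v

namespace WeightedGraph

/-- An edge weight `d` is intrinsic if `Σ_{e ∈ E_v} d(e)² b(e) ≤ m(v)` for all `v`. -/
def Intrinsic (Γ : WeightedGraph) (d : Γ.E → ℝ) : Prop :=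
  ∀ v, ∑ e ∈ (Γ.locfin v).toFinset, d e ^ 2 * Γ.b e ≤ Γ.m v

/-- The boundary edges of a vertex set: edges with exactly one endpoint in `X`. -/
def Eb (Γ : WeightedGraph) (X : Set Γ.V) : Set Γ.E :=
  {e | Xor' ((Γ.ends e).1 ∈ X) ((Γ.ends e).2 ∈ X)}

/-- The discrete isoperimetric constant `α_d(U)` with respect to the weight `d`. -/
def alphaD (Γ : WeightedGraph) (d : Γ.E → ℝ) (U : Set Γ.V) : ℝ :=
  sInf {r : ℝ | ∃ X : Finset Γ.V, ↑X ⊆ U ∧ X.Nonempty ∧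
    r = (∑ᶠ e ∈ Γ.Eb ↑X, d e * Γ.b e) / ∑ v ∈ X, Γ.m v}

/-- The discrete isoperimetric constant at infinity, in `[0,∞]`. -/
def alphaDEssEnn (Γ : WeightedGraph) (d : Γ.E → ℝ) : ℝ≥0∞ :=
  ⨆ X : Finset Γ.V, ENNReal.ofReal (Γ.alphaD d (↑X : Set Γ.V)ᶜ)

/-- The energy form `Q(u) = Σ_e b(e) (u(e_i) − u(e_0))²`. -/
def Q (Γ : WeightedGraph) (u : Γ.V → ℝ) : ℝ :=
  ∑ᶠ e : Γ.E, Γ.b e * (u (Γ.ends e).2 - u (Γ.ends e).1) ^ 2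

/-- The squared norm `Σ_v m(v) u(v)²`. -/
def normSqD (Γ : WeightedGraph) (u : Γ.V → ℝ) : ℝ :=
  ∑ᶠ v : Γ.V, Γ.m v * u v ^ 2

/-- The bottom of the spectrum of the Friedrichs extension of the weighted Laplacian,
via the variational characterization over finitely supported functions. -/
def lambda0 (Γ : WeightedGraph) : ℝ :=
  sInf {r : ℝ | ∃ u : Γ.V → ℝ, (Function.support u).Finite ∧ u ≠ 0 ∧
    r = Γ.Q u / Γ.normSqD u}

/-- The bottom of the essential spectrum of the Friedrichs extension, via Glazman's
decomposition principle, in `[0,∞]`. -/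
def lambda0EssEnn (Γ : WeightedGraph) : ℝ≥0∞ :=
  ⨆ X : Finset Γ.V, ⨅ (u : Γ.V → ℝ)
    (_ : (Function.support u).Finite ∧ u ≠ 0 ∧ ∀ v ∈ X, u v = 0),
      ENNReal.ofReal (Γ.Q u / Γ.normSqD u)

end WeightedGraph

end

/-!
Charge every edge of a finite subgraph `F` to its tail. Since `K(v) |e| ≤ 1 - #E_v⁻/#E_v⁺`
for `e ∈ E_v⁺`, we get `K · mes F ≤ Σ_v (a_v - a_v #E_v⁻/#E_v⁺)`, where `a_v` (resp. `b_v`)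
counts the edges of `F` leaving (resp. entering) `v`, and `K` is the least curvature on `F`.
As `Σ a_v = Σ b_v = #F`, this equals `Σ_v (b_v - a_v #E_v⁻/#E_v⁺)`. At an interior vertex
`a_v = #E_v⁺` and `b_v = #E_v⁻`, so its term vanishes; at a boundary vertex it is at most
`b_v ≤ deg_F v`. Hence `K · mes F ≤ deg ∂F`, and a subgraph avoiding the stars of a finite
vertex set `W` only has vertices outside `W`.
-/

open Finset

namespace MetricGraph

variable {Γ : MetricGraph}

lemma fst_mem_vertsOf {F : Finset Γ.E} {e : Γ.E} (he : e ∈ F) : (Γ.ends e).1 ∈ Γ.vertsOf F :=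
  mem_union_left _ (mem_image_of_mem _ he)

lemma snd_mem_vertsOf {F : Finset Γ.E} {e : Γ.E} (he : e ∈ F) : (Γ.ends e).2 ∈ Γ.vertsOf F :=
  mem_union_right _ (mem_image_of_mem _ he)

lemma mes_pos {F : Finset Γ.E} (hF : F.Nonempty) : 0 < Γ.mes F :=
  sum_pos (fun e _ => Γ.len_pos e) hF

lemma degBdry_nonneg (F : Finset Γ.E) : 0 ≤ Γ.degBdry F :=
  sum_nonneg fun _ _ => Nat.cast_nonneg _

-- `K(v) = 0` when `E_v⁺ = ∅`, since division by `0` returns `0`.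
lemma plusE_ncard_pos_of_Kcurv_pos {v : Γ.V} (hK : 0 < Γ.Kcurv v) :
    0 < (Γ.plusE v).ncard := by
  refine Nat.pos_of_ne_zero fun h0 => hK.ne' ?_
  simp [Kcurv, h0]

lemma Kcurv_mul_len_le {v : Γ.V} (hK : 0 < Γ.Kcurv v) {e : Γ.E} (he : e ∈ Γ.plusE v) :
    Γ.Kcurv v * Γ.len e ≤
      (((Γ.plusE v).ncard : ℝ) - (Γ.minusE v).ncard) / (Γ.plusE v).ncard := by
  set r := (((Γ.plusE v).ncard : ℝ) - (Γ.minusE v).ncard) / (Γ.plusE v).ncard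
  set s := sInf ((fun e => 1 / Γ.len e) '' Γ.plusE v)
  have hlen := Γ.len_pos e
  have hlower : ∀ x ∈ (fun e => 1 / Γ.len e) '' Γ.plusE v, 0 ≤ x := by
    rintro _ ⟨e', -, rfl⟩
    exact (one_div_pos.2 (Γ.len_pos e')).le
  have hs : 0 ≤ s := Real.sInf_nonneg hlower
  have hr : 0 < r := pos_of_mul_pos_left hK hs
  have hse : s * Γ.len e ≤ 1 :=
    calc s * Γ.len e ≤ 1 / Γ.len e * Γ.len e := by
          gcongr
          exact csInf_le ⟨0, hlower⟩ ⟨e, he, rfl⟩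
      _ = 1 := one_div_mul_cancel hlen.ne'
  calc Γ.Kcurv v * Γ.len e = r * (s * Γ.len e) := mul_assoc r s _
    _ ≤ r := mul_le_of_le_one_right hr.le hse

lemma star_subset_of_degree_le_degIn {F : Finset Γ.E} {v : Γ.V}
    (h : Γ.degree v ≤ Γ.degIn F v) : Γ.star v ⊆ F := by
  have hsub : {e ∈ F | (Γ.ends e).1 = v ∨ (Γ.ends e).2 = v} ⊆ (Γ.locfin v).toFinset :=
    fun e he => (Set.Finite.mem_toFinset _).2 (mem_filter.1 he).2
  have heq := eq_of_subset_of_card_le hsub h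
  intro e he
  have : e ∈ (Γ.locfin v).toFinset := (Set.Finite.mem_toFinset _).2 he
  rw [← heq] at this
  exact (mem_filter.1 this).1

lemma card_filter_eq_ncard_of_subset {F : Finset Γ.E} {S : Set Γ.E} [DecidablePred (· ∈ S)]
    (h : S ⊆ F) : #{e ∈ F | e ∈ S} = S.ncard := by
  rw [← Set.ncard_coe_finset, coe_filter]
  congr 1
  ext e
  exact ⟨fun he => he.2, fun he => ⟨h he, he⟩⟩

lemma card_out_mul_le {F : Finset Γ.E} {v : Γ.V} (hp : 0 < (Γ.plusE v).ncard) :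
    (#{e ∈ F | (Γ.ends e).1 = v} : ℝ) *
        ((((Γ.plusE v).ncard : ℝ) - (Γ.minusE v).ncard) / (Γ.plusE v).ncard) ≤
      #{e ∈ F | (Γ.ends e).1 = v} - #{e ∈ F | (Γ.ends e).2 = v} +
        if Γ.degIn F v < Γ.degree v then (Γ.degIn F v : ℝ) else 0 := by
  have hp' : (0 : ℝ) < (Γ.plusE v).ncard := by exact_mod_cast hp
  split_ifs with hbd
  · have hb : #{e ∈ F | (Γ.ends e).2 = v} ≤ Γ.degIn F v :=
      card_le_card (monotone_filter_right _ fun _ _ => Or.inr)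
    have hratio : (((Γ.plusE v).ncard : ℝ) - (Γ.minusE v).ncard) / (Γ.plusE v).ncard ≤ 1 :=
      (div_le_one hp').2 (sub_le_self _ (Nat.cast_nonneg _))
    have hb' : (#{e ∈ F | (Γ.ends e).2 = v} : ℝ) ≤ Γ.degIn F v := by exact_mod_cast hb
    calc (#{e ∈ F | (Γ.ends e).1 = v} : ℝ) *
          ((((Γ.plusE v).ncard : ℝ) - (Γ.minusE v).ncard) / (Γ.plusE v).ncard)
        ≤ #{e ∈ F | (Γ.ends e).1 = v} := mul_le_of_le_one_right (Nat.cast_nonneg _) hratio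
      _ ≤ _ := by linarith
  · have hstar := star_subset_of_degree_le_degIn (not_lt.1 hbd)
    have ha : #{e ∈ F | (Γ.ends e).1 = v} = (Γ.plusE v).ncard :=
      card_filter_eq_ncard_of_subset (S := Γ.plusE v) fun _ he => hstar (Or.inl he)
    have hb : #{e ∈ F | (Γ.ends e).2 = v} = (Γ.minusE v).ncard :=
      card_filter_eq_ncard_of_subset (S := Γ.minusE v) fun _ he => hstar (Or.inr he)
    rw [ha, hb, mul_div_cancel₀ _ hp'.ne']
    simp

theorem mul_mes_le_degBdry (F : Finset Γ.E) {k : ℝ} (hk : ∀ v ∈ Γ.vertsOf F, k ≤ Γ.Kcurv v) :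
    k * Γ.mes F ≤ Γ.degBdry F := by
  rcases le_or_gt k 0 with hk0 | hk0
  · exact (mul_nonpos_of_nonpos_of_nonneg hk0
      (sum_nonneg fun e _ => (Γ.len_pos e).le)).trans (degBdry_nonneg F)
  have hK : ∀ v ∈ Γ.vertsOf F, 0 < Γ.Kcurv v := fun v hv => hk0.trans_le (hk v hv)
  have hout : ∑ v ∈ Γ.vertsOf F, (#{e ∈ F | (Γ.ends e).1 = v} : ℝ) = #F := by
    exact_mod_cast (card_eq_sum_card_fiberwise fun _ he => fst_mem_vertsOf he).symm
  have hin : ∑ v ∈ Γ.vertsOf F, (#{e ∈ F | (Γ.ends e).2 = v} : ℝ) = #F := by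
    exact_mod_cast (card_eq_sum_card_fiberwise fun _ he => snd_mem_vertsOf he).symm
  calc k * Γ.mes F = ∑ v ∈ Γ.vertsOf F, ∑ e ∈ F with (Γ.ends e).1 = v, k * Γ.len e := by
        rw [mes, mul_sum, sum_fiberwise_of_maps_to fun _ he => fst_mem_vertsOf he]
    _ ≤ ∑ v ∈ Γ.vertsOf F, (#{e ∈ F | (Γ.ends e).1 = v} : ℝ) *
          ((((Γ.plusE v).ncard : ℝ) - (Γ.minusE v).ncard) / (Γ.plusE v).ncard) := by
        refine sum_le_sum fun v hv => ?_
        rw [← nsmul_eq_mul, ← sum_const]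
        refine sum_le_sum fun e he => ?_
        exact (mul_le_mul_of_nonneg_right (hk v hv) (Γ.len_pos e).le).trans
          (Kcurv_mul_len_le (hK v hv) (mem_filter.1 he).2)
    _ ≤ ∑ v ∈ Γ.vertsOf F, ((#{e ∈ F | (Γ.ends e).1 = v} : ℝ) -
          #{e ∈ F | (Γ.ends e).2 = v} +
          if Γ.degIn F v < Γ.degree v then (Γ.degIn F v : ℝ) else 0) :=
        sum_le_sum fun v hv => card_out_mul_le (plusE_ncard_pos_of_Kcurv_pos (hK v hv))
    _ = Γ.degBdry F := by
        rw [sum_add_distrib, sum_sub_distrib, hout, hin, sub_self, zero_add, degBdry, bdry,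
          sum_filter]

lemma disjoint_vertsOf_of_disjoint_stars {F : Finset Γ.E} {W : Finset Γ.V}
    (h : Disjoint F (W.biUnion fun v => (Γ.locfin v).toFinset)) : Disjoint (Γ.vertsOf F) W := by
  refine disjoint_left.2 fun v hv hvW => ?_
  have hstar : ∀ e ∈ F, e ∉ (Γ.locfin v).toFinset := fun e he hev =>
    disjoint_left.1 h he (mem_biUnion.2 ⟨v, hvW, hev⟩)
  rcases mem_union.1 hv with hv | hv <;> obtain ⟨e, he, rfl⟩ := mem_image.1 hv
  · exact hstar e he ((Set.Finite.mem_toFinset _).2 (Or.inl rfl))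
  · exact hstar e he ((Set.Finite.mem_toFinset _).2 (Or.inr rfl))

end MetricGraph

theorem alphaEss_ge_liminf_curvature_general (Γ : MetricGraph) :
    Γ.KcurvEssEnn ≤ Γ.alphaEssEnn := by
  refine iSup_le fun W => le_iSup_of_le (W.biUnion fun v => (Γ.locfin v).toFinset) ?_
  refine le_iInf₂ fun F ⟨⟨hFne, _⟩, hdisj⟩ => ?_
  have hne : (Γ.vertsOf F).Nonempty :=
    let ⟨e, he⟩ := hFne
    ⟨_, MetricGraph.fst_mem_vertsOf he⟩
  obtain ⟨v₀, hv₀, hmin⟩ := (Γ.vertsOf F).exists_min_image Γ.Kcurv hne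
  have hv₀W : v₀ ∉ W :=
    disjoint_left.1 (MetricGraph.disjoint_vertsOf_of_disjoint_stars hdisj) hv₀
  calc ⨅ v : {v // v ∉ W}, ENNReal.ofReal (Γ.Kcurv v) ≤ ENNReal.ofReal (Γ.Kcurv v₀) :=
        iInf_le (fun v : {v // v ∉ W} => ENNReal.ofReal (Γ.Kcurv v)) ⟨v₀, hv₀W⟩
    _ ≤ ENNReal.ofReal (Γ.degBdry F / Γ.mes F) := ENNReal.ofReal_le_ofReal <|
        (le_div_iff₀ (MetricGraph.mes_pos hFne)).2 (MetricGraph.mul_mes_le_degBdry F hmin)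

/-- **Lemma 6.5 (first part).** If `K(v) > 0` for every vertex `v`
(in particular `E_v⁺ ≠ ∅`), then `α_ess(G) ≥ K^ess(G) = liminf_{v ∈ V} K(v)`. -/
theorem alphaEss_ge_liminf_curvature (Γ : MetricGraph)
    (h : ∀ v : Γ.V, (Γ.plusE v).Nonempty ∧ 0 < Γ.Kcurv v) :
    Γ.KcurvEssEnn ≤ Γ.alphaEssEnn :=
  alphaEss_ge_liminf_curvature_general Γ
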